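/- Let Γ be a subgroup of the group of disk Möbius transformations that is cocompact, i.e., there is a compact set K contained in the open unit disk 𝔻 = {z ∈ ℂ : |z| < 1} with ⋃_{γ∈Γ} γ(K) = 𝔻. Then every Γ-invariant Radon measure α on G is a bounded geodesic current: for every continuous compactly supported function ξ : G → ℝ, the supremum over all disk Möbius transformations φ of |∫_G ξ∘φ dα| is finite. -/

import Mathlib

open MeasureTheory Filter Topology Set
open scoped ENNReal

noncomputable section

instance : MeasurableSpace Circle := borel Circle
instance : BorelSpace Circle := ⟨rfl⟩

/-- Four points of the unit circle in (strict) counterclockwise order. -/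
def Ccw4 (a b c d : Circle) : Prop :=
  ∃ t₁ t₂ t₃ t₄ : ℝ, t₁ < t₂ ∧ t₂ < t₃ ∧ t₃ < t₄ ∧ t₄ < t₁ + 2 * Real.pi ∧
    a = Circle.exp t₁ ∧ b = Circle.exp t₂ ∧ c = Circle.exp t₃ ∧ d = Circle.exp t₄

/-- Three points of the unit circle in counterclockwise (cyclic) order. -/
def Ccw3 (a b c : Circle) : Prop :=
  ∃ t₁ t₂ t₃ : ℝ, t₁ < t₂ ∧ t₂ < t₃ ∧ t₃ < t₁ + 2 * Real.pi ∧
    a = Circle.exp t₁ ∧ b = Circle.exp t₂ ∧ c = Circle.exp t₃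

/-- The closed counterclockwise arc from `a` to `b` on the circle. -/
def arcCC (a b : Circle) : Set Circle :=
  {z | ∃ t₁ t t₂ : ℝ, t₁ ≤ t ∧ t ≤ t₂ ∧ t₂ < t₁ + 2 * Real.pi ∧
    a = Circle.exp t₁ ∧ z = Circle.exp t ∧ b = Circle.exp t₂}

/-- The box of geodesics `[a,b] × [c,d]`. -/
def boxSet (a b c d : Circle) : Set (Circle × Circle) := arcCC a b ×ˢ arcCC c d

/-- The space `G` of geodesics of the unit disk: pairs of distinct boundary points. -/
def geodSet : Set (Circle × Circle) := {p | p.1 ≠ p.2}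

/-- The cross-ratio of four points of `ℂ`. -/
def cr (a b c d : ℂ) : ℂ := ((a - c) * (b - d)) / ((a - d) * (b - c))

/-- The Liouville measure on the space of geodesics: the pushforward under
`(s,u) ↦ (exp (i s), exp (i u))` of the measure `ds du / |exp(is) - exp(iu)|²`
on a fundamental domain for the periodicity. -/
def liouville : Measure (Circle × Circle) :=
  Measure.map (fun p : ℝ × ℝ => (Circle.exp p.1, Circle.exp p.2))
    (((volume : Measure (ℝ × ℝ)).restrict
        (Set.Ico 0 (2 * Real.pi) ×ˢ Set.Ico 0 (2 * Real.pi))).withDensity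
      fun p : ℝ × ℝ =>
        ENNReal.ofReal
          (1 / ‖(Complex.exp ((p.1 : ℂ) * Complex.I) -
            Complex.exp ((p.2 : ℂ) * Complex.I))‖ ^ 2))

/-- `φ : Circle → Circle` is the boundary restriction of a disk Möbius transformation. -/
def IsMobius (φ : Circle → Circle) : Prop :=
  ∃ α β : ℂ, ‖α‖ ^ 2 - ‖β‖ ^ 2 = 1 ∧
    ∀ z : Circle, (φ z : ℂ) = (α * z + β) / ((starRingEnd ℂ) β * z + (starRingEnd ℂ) α)

/-- A homeomorphism of the circle is orientation-preserving if it preserves the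
counterclockwise cyclic order of triples of points. -/
def OrientationPreserving (h : Circle ≃ₜ Circle) : Prop :=
  ∀ a b c : Circle, Ccw3 a b c → Ccw3 (h a) (h b) (h c)

/-- The pullback Liouville current `L_h`, with `L_h (A) = L ((h × h) (A))`. -/
def pullbackCurrent (h : Circle ≃ₜ Circle) : Measure (Circle × Circle) :=
  Measure.map (⇑(h.prodCongr h).symm) liouville

/-- The quasisymmetric constant `M(h)`: the supremum over symmetric boxes `Q`
(those with `L(Q) = log 2`) of `L((h×h)(Q)) / log 2`. -/
def qsConst (h : Circle ≃ₜ Circle) : ℝ≥0∞ :=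
  ⨆ (a : Circle) (b : Circle) (c : Circle) (d : Circle) (_ : Ccw4 a b c d)
    (_ : liouville (boxSet a b c d) = ENNReal.ofReal (Real.log 2)),
    liouville ((fun p : Circle × Circle => (h p.1, h p.2)) '' boxSet a b c d) /
      ENNReal.ofReal (Real.log 2)

/-- `h` is quasisymmetric if its quasisymmetric constant is finite. -/
def Quasisymmetric (h : Circle ≃ₜ Circle) : Prop := qsConst h < ⊤

/-- A geodesic current: a Radon measure on the space of geodesics, encoded as a Borel
measure on `Circle × Circle` which vanishes on the diagonal and is finite on compact
subsets of the off-diagonal. -/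
def IsGeodesicCurrent (μ : Measure (Circle × Circle)) : Prop :=
  μ {p : Circle × Circle | p.1 = p.2} = 0 ∧
    ∀ K : Set (Circle × Circle), IsCompact K → K ⊆ geodSet → μ K < ⊤

/-- A bounded geodesic current. -/
def BoundedCurrent (μ : Measure (Circle × Circle)) : Prop :=
  IsGeodesicCurrent μ ∧
    ∀ ξ : Circle × Circle → ℝ, Continuous ξ → tsupport ξ ⊆ geodSet →
      ∃ C : ℝ, ∀ φ : Circle → Circle, IsMobius φ → |∫ p, ξ (φ p.1, φ p.2) ∂μ| ≤ C

/-- Uniform weak-star convergence of measures on the space of geodesics. -/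
def UnifWeakStarTendsto (μs : ℕ → Measure (Circle × Circle))
    (μ : Measure (Circle × Circle)) : Prop :=
  ∀ ξ : Circle × Circle → ℝ, Continuous ξ → tsupport ξ ⊆ geodSet →
    ∀ ε : ℝ, 0 < ε → ∃ N : ℕ, ∀ n ≥ N, ∀ φ : Circle → Circle, IsMobius φ →
      |∫ p, ξ (φ p.1, φ p.2) ∂(μs n) - ∫ p, ξ (φ p.1, φ p.2) ∂μ| ≤ ε

/-- A point lies in the (topological) support of a measure. -/
def MemSupport (μ : Measure (Circle × Circle)) (p : Circle × Circle) : Prop :=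
  ∀ U : Set (Circle × Circle), IsOpen U → p ∈ U → 0 < μ U

/-- The hyperbolic translation of length `s` along the geodesic from `p` to `q`. -/
def hypTranslate (s : ℝ) (p q w : ℂ) : ℂ :=
  ((Real.exp s : ℂ) * q * (w - p) - p * (w - q)) /
    ((Real.exp s : ℂ) * (w - p) - (w - q))

/-- `e` is the elementary earthquake of amplitude `s` along the geodesic `(x, y)`
applied to `h`: it agrees with `h` on the closed counterclockwise arc from `x` to `y`,
and with `T_s ∘ h` on the complementary open arc. -/
def IsElemEarthquake (x y : Circle) (s : ℝ) (h e : Circle ≃ₜ Circle) : Prop :=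
  (∀ z ∈ arcCC x y, e z = h z) ∧
    ∀ z : Circle, z ∉ arcCC x y → (e z : ℂ) = hypTranslate s (h x) (h y) (h z)

/-- The disk Möbius transformation with parameters `g = (α, β)`. -/
def mobiusFun (g : ℂ × ℂ) : ℂ → ℂ := fun z =>
  (g.1 * z + g.2) / ((starRingEnd ℂ) g.2 * z + (starRingEnd ℂ) g.1)

/-- Product of Möbius parameters, corresponding to composition of the transformations. -/
def mobiusComp (g₁ g₂ : ℂ × ℂ) : ℂ × ℂ :=
  (g₁.1 * g₂.1 + g₁.2 * (starRingEnd ℂ) g₂.2, g₁.1 * g₂.2 + g₁.2 * (starRingEnd ℂ) g₂.1)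

/-- The point `exp (i t)` of the unit circle, as a complex number. -/
def cirexp (t : ℝ) : ℂ := Complex.exp ((t : ℂ) * Complex.I)

/-- The chord length `|exp (i s) - exp (i u)|`. -/
def chord (s u : ℝ) : ℝ := ‖cirexp s - cirexp u‖


namespace S14

lemma normSq_comp (g₁ g₂ : ℂ × ℂ) :
    Complex.normSq (mobiusComp g₁ g₂).1 - Complex.normSq (mobiusComp g₁ g₂).2
      = (Complex.normSq g₁.1 - Complex.normSq g₁.2) *
        (Complex.normSq g₂.1 - Complex.normSq g₂.2) := by
  simp only [mobiusComp, Complex.normSq_apply, Complex.add_re, Complex.add_im, Complex.mul_re,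
    Complex.mul_im, Complex.conj_re, Complex.conj_im]
  ring

lemma det_eq (g : ℂ × ℂ) :
    norm g.1 ^ 2 - norm g.2 ^ 2
      = Complex.normSq g.1 - Complex.normSq g.2 := by
  rw [Complex.sq_norm, Complex.sq_norm]

lemma det_comp (g₁ g₂ : ℂ × ℂ) (h₁ : norm g₁.1 ^ 2 - norm g₁.2 ^ 2 = 1)
    (h₂ : norm g₂.1 ^ 2 - norm g₂.2 ^ 2 = 1) :
    norm (mobiusComp g₁ g₂).1 ^ 2 - norm (mobiusComp g₁ g₂).2 ^ 2 = 1 := by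
  rw [det_eq] at *
  rw [normSq_comp, h₁, h₂, one_mul]

lemma denom_ne (g : ℂ × ℂ) (hg : norm g.1 ^ 2 - norm g.2 ^ 2 = 1)
    {z : ℂ} (hz : norm z ≤ 1) :
    (starRingEnd ℂ) g.2 * z + (starRingEnd ℂ) g.1 ≠ 0 := by
  intro h
  have h1 : (starRingEnd ℂ) g.1 = -((starRingEnd ℂ) g.2 * z) := by linear_combination h
  have h2 : norm g.1 = norm g.2 * norm z := by
    have := congrArg norm h1
    simpa [norm_mul] using this
  have h3 : (0:ℝ) ≤ norm g.2 := norm_nonneg _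
  have h5 : norm g.1 ≤ norm g.2 := by
    calc norm g.1 = norm g.2 * norm z := h2
    _ ≤ norm g.2 * 1 := by exact mul_le_mul_of_nonneg_left hz h3
    _ = norm g.2 := mul_one _
  nlinarith [norm_nonneg g.1]

lemma mobius_comp_apply (g₁ g₂ : ℂ × ℂ) {z : ℂ}
    (h2 : (starRingEnd ℂ) g₂.2 * z + (starRingEnd ℂ) g₂.1 ≠ 0) :
    mobiusFun g₁ (mobiusFun g₂ z) = mobiusFun (mobiusComp g₁ g₂) z := by
  simp only [mobiusFun]
  set N := g₂.1 * z + g₂.2 with hN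
  set D := (starRingEnd ℂ) g₂.2 * z + (starRingEnd ℂ) g₂.1 with hD
  have e1 : g₁.1 * (N / D) + g₁.2 = (g₁.1 * N + g₁.2 * D) / D := by field_simp
  have e2 : (starRingEnd ℂ) g₁.2 * (N / D) + (starRingEnd ℂ) g₁.1
      = ((starRingEnd ℂ) g₁.2 * N + (starRingEnd ℂ) g₁.1 * D) / D := by field_simp
  rw [e1, e2, div_div_div_cancel_right₀ h2]
  congr 1
  · simp only [mobiusComp, hN, hD]; ring
  · simp only [mobiusComp, hN, hD, map_add, map_mul, Complex.conj_conj]; ring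

lemma mobiusFun_one (z : ℂ) : mobiusFun ((1:ℂ), (0:ℂ)) z = z := by
  simp [mobiusFun]

lemma comp_inv_left (g : ℂ × ℂ) (hg : norm g.1 ^ 2 - norm g.2 ^ 2 = 1) :
    mobiusComp ((starRingEnd ℂ) g.1, -g.2) g = ((1:ℂ), (0:ℂ)) := by
  have h1 : (starRingEnd ℂ) g.1 * g.1 - g.2 * (starRingEnd ℂ) g.2 = 1 := by
    rw [mul_comm ((starRingEnd ℂ) g.1), Complex.mul_conj, Complex.mul_conj]
    rw [det_eq] at hg
    exact_mod_cast hg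
  simp only [mobiusComp, Prod.mk.injEq]
  refine ⟨by linear_combination h1, by ring⟩

lemma det_inv (g : ℂ × ℂ) (hg : norm g.1 ^ 2 - norm g.2 ^ 2 = 1) :
    norm ((starRingEnd ℂ) g.1) ^ 2 - norm (-g.2) ^ 2 = 1 := by
  simpa using hg

lemma abs_mobius (g : ℂ × ℂ) (hg : norm g.1 ^ 2 - norm g.2 ^ 2 = 1)
    {z : ℂ} (hz : norm z = 1) : norm (mobiusFun g z) = 1 := by
  have hD : (starRingEnd ℂ) g.2 * z + (starRingEnd ℂ) g.1 ≠ 0 := denom_ne g hg hz.le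
  have hzz : z * (starRingEnd ℂ) z = 1 := by
    rw [Complex.mul_conj]
    norm_cast
    rw [← Complex.sq_norm, hz, one_pow]
  have hNum : g.1 * z + g.2
      = z * (starRingEnd ℂ) ((starRingEnd ℂ) g.2 * z + (starRingEnd ℂ) g.1) := by
    simp only [map_add, map_mul, Complex.conj_conj]
    linear_combination -g.2 * hzz
  rw [mobiusFun, hNum, norm_div, norm_mul, hz, Complex.norm_conj, one_mul, div_self]
  exact fun h => hD (norm_eq_zero.mp h)

lemma mobius_inj (g : ℂ × ℂ) (hg : norm g.1 ^ 2 - norm g.2 ^ 2 = 1)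
    {z w : ℂ} (hz : norm z ≤ 1) (hw : norm w ≤ 1)
    (h : mobiusFun g z = mobiusFun g w) : z = w := by
  have hDz := denom_ne g hg hz
  have hDw := denom_ne g hg hw
  rw [mobiusFun, mobiusFun, div_eq_div_iff hDz hDw] at h
  have m1 : g.1 * (starRingEnd ℂ) g.1 = (Complex.normSq g.1 : ℂ) := Complex.mul_conj g.1
  have m2 : g.2 * (starRingEnd ℂ) g.2 = (Complex.normSq g.2 : ℂ) := Complex.mul_conj g.2
  have hc : ((Complex.normSq g.1 : ℂ) - (Complex.normSq g.2 : ℂ)) = 1 := by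
    rw [det_eq] at hg
    norm_cast
  have key : (z - w) * ((Complex.normSq g.1 : ℂ) - (Complex.normSq g.2 : ℂ)) = 0 := by
    linear_combination h - (z - w) * m1 + (z - w) * m2
  rw [hc, mul_one, sub_eq_zero] at key
  exact key

/-- Build a circle point from a complex number of modulus one. -/
def cpt (w : ℂ) (h : norm w = 1) : Circle :=
  ⟨w, show w ∈ Metric.sphere (0:ℂ) 1 from
    mem_sphere_zero_iff_norm.2 (by exact h)⟩

@[simp] lemma cpt_coe (w : ℂ) (h : norm w = 1) : (cpt w h : ℂ) = w := rfl

end S14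

open S14

/-- for a cocompact group `Γ` of disk Möbius transformations, every
`Γ`-invariant Radon measure on the space of geodesics is a bounded geodesic current. -/
theorem stmt14 (Γ : Set (ℂ × ℂ))
    (hnorm : ∀ g ∈ Γ, ‖g.1‖ ^ 2 - ‖g.2‖ ^ 2 = 1)
    (hone : ((1 : ℂ), (0 : ℂ)) ∈ Γ)
    (hmul : ∀ g₁ ∈ Γ, ∀ g₂ ∈ Γ, mobiusComp g₁ g₂ ∈ Γ)
    (hinv : ∀ g ∈ Γ, ((starRingEnd ℂ) g.1, -g.2) ∈ Γ)
    (K : Set ℂ) (hK : IsCompact K) (hKD : K ⊆ Metric.ball (0 : ℂ) 1)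
    (hcover : (⋃ g ∈ Γ, mobiusFun g '' K) = Metric.ball (0 : ℂ) 1)
    (α : Measure (Circle × Circle)) (hα : IsGeodesicCurrent α)
    (hinvar : ∀ g ∈ Γ, ∀ φ : Circle → Circle,
      (∀ z : Circle, (φ z : ℂ) = mobiusFun g (z : ℂ)) →
      ∀ A : Set (Circle × Circle), MeasurableSet A →
        α ((fun p : Circle × Circle => (φ p.1, φ p.2)) ⁻¹' A) = α A) :
    ∀ ξ : Circle × Circle → ℝ, Continuous ξ → tsupport ξ ⊆ geodSet →
      ∃ C : ℝ, ∀ φ : Circle → Circle, IsMobius φ →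
        |∫ p, ξ (φ p.1, φ p.2) ∂α| ≤ C := by
  intro ξ hξc hξs
  set S : Set (Circle × Circle) := tsupport ξ with hS
  have hScl : IsClosed S := isClosed_tsupport ξ
  have hScpt : IsCompact S := hScl.isCompact
  -- basic facts about K
  have hk1 : ∀ k ∈ K, norm k < 1 := by
    intro k hk
    have := hKD hk
    rwa [Metric.mem_ball, Complex.dist_eq, sub_zero] at this
  set s : ℂ → ℝ := fun k => Real.sqrt (1 - norm k ^ 2) with hsdef
  have hs_pos : ∀ k ∈ K, 0 < s k := by
    intro k hk
    apply Real.sqrt_pos.2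
    nlinarith [hk1 k hk, norm_nonneg k]
  have hs_sq : ∀ k ∈ K, s k ^ 2 = 1 - norm k ^ 2 := by
    intro k hk
    apply Real.sq_sqrt
    nlinarith [hk1 k hk, norm_nonneg k]
  -- the compact parameter set P
  set F : ℂ × Circle → ℂ × ℂ := fun q =>
    ((q.2 : ℂ) / ((s q.1 : ℝ) : ℂ), (starRingEnd ℂ) (q.2 : ℂ) * q.1 / ((s q.1 : ℝ) : ℂ)) with hF
  set P : Set (ℂ × ℂ) := F '' (K ×ˢ (univ : Set Circle)) with hP
  have hsne : ∀ q : ℂ × Circle, q ∈ K ×ˢ (univ : Set Circle) → ((s q.1 : ℝ) : ℂ) ≠ 0 := by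
    intro q hq
    have := hs_pos q.1 hq.1
    simp only [ne_eq, Complex.ofReal_eq_zero]
    linarith
  have hscont : Continuous fun q : ℂ × Circle => ((s q.1 : ℝ) : ℂ) := by
    have h1 : Continuous fun q : ℂ × Circle => 1 - norm q.1 ^ 2 := by
      exact continuous_const.sub ((continuous_norm.comp continuous_fst).pow 2)
    exact Complex.continuous_ofReal.comp (Real.continuous_sqrt.comp h1)
  have hFcont : ContinuousOn F (K ×ˢ (univ : Set Circle)) := by
    apply ContinuousOn.prodMk
    · exact ContinuousOn.div
        (continuous_subtype_val.comp continuous_snd).continuousOn hscont.continuousOn hsne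
    · exact ContinuousOn.div
        (((continuous_star.comp (continuous_subtype_val.comp continuous_snd)).mul
          continuous_fst)).continuousOn hscont.continuousOn hsne
  have hPcpt : IsCompact P := (hK.prod isCompact_univ).image_of_continuousOn hFcont
  have hPdet : ∀ h ∈ P, norm h.1 ^ 2 - norm h.2 ^ 2 = 1 := by
    rintro _ ⟨⟨k, v⟩, ⟨hk, -⟩, rfl⟩
    have hspos := hs_pos k hk
    have hssq := hs_sq k hk
    simp only [hF, norm_div, norm_mul, Complex.norm_real, Real.norm_eq_abs, Circle.norm_coe, Complex.norm_conj,
      abs_of_pos hspos, one_mul, div_pow, mul_pow]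
    rw [div_sub_div_same]
    rw [hssq, one_pow]
    rw [div_self (by nlinarith [hk1 k hk, norm_nonneg k] : (1 - norm k ^ 2) ≠ 0)]
  -- the big compact set L
  set GG : (ℂ × ℂ) × (Circle × Circle) → ℂ × ℂ := fun q =>
    (mobiusFun q.1 (q.2.1 : ℂ), mobiusFun q.1 (q.2.2 : ℂ)) with hGG
  have hGGcont : ContinuousOn GG (P ×ˢ S) := by
    have hcont1 : ∀ pick : (Circle × Circle) → Circle, Continuous pick →
        ContinuousOn (fun q : (ℂ × ℂ) × (Circle × Circle) =>
          mobiusFun q.1 ((pick q.2 : Circle) : ℂ)) (P ×ˢ S) := by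
      intro pick hpick
      simp only [mobiusFun]
      apply ContinuousOn.div
      · exact ((continuous_fst.fst.mul
          (continuous_subtype_val.comp (hpick.comp continuous_snd))).add
          continuous_fst.snd).continuousOn
      · exact (((continuous_star.comp continuous_fst.snd).mul
          (continuous_subtype_val.comp (hpick.comp continuous_snd))).add
          (continuous_star.comp continuous_fst.fst)).continuousOn
      · rintro ⟨g, p⟩ ⟨hg, -⟩
        exact denom_ne g (hPdet g hg) (Circle.norm_coe _).le
    exact (hcont1 Prod.fst continuous_fst).prodMk (hcont1 Prod.snd continuous_snd)
  set L0 : Set (ℂ × ℂ) := GG '' (P ×ˢ S) with hL0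
  have hL0cpt : IsCompact L0 := (hPcpt.prod hScpt).image_of_continuousOn hGGcont
  set L : Set (Circle × Circle) := {p | ((p.1 : ℂ), (p.2 : ℂ)) ∈ L0} with hL
  have hLcpt : IsCompact L := by
    have he : Topology.IsEmbedding fun p : Circle × Circle => ((p.1 : ℂ), (p.2 : ℂ)) :=
      Topology.IsEmbedding.subtypeVal.prodMap Topology.IsEmbedding.subtypeVal
    rw [he.isCompact_iff]
    have : (fun p : Circle × Circle => ((p.1 : ℂ), (p.2 : ℂ))) '' L = L0 := by
      apply Subset.antisymm
      · rintro _ ⟨p, hp, rfl⟩; exact hp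
      · rintro w hw
        obtain ⟨⟨g, q⟩, ⟨hg, hq⟩, rfl⟩ := hw
        refine ⟨(cpt _ (abs_mobius g (hPdet g hg) (Circle.norm_coe q.1)),
          cpt _ (abs_mobius g (hPdet g hg) (Circle.norm_coe q.2))), ?_, rfl⟩
        exact ⟨(g, q), ⟨hg, hq⟩, rfl⟩
    rwa [this]
  have hLgeod : L ⊆ geodSet := by
    rintro p ⟨⟨g, q⟩, ⟨hg, hq⟩, heq⟩
    have hq12 : q.1 ≠ q.2 := hξs hq
    intro hpe
    apply hq12
    have h1 : mobiusFun g (q.1 : ℂ) = (p.1 : ℂ) := congrArg Prod.fst heq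
    have h2 : mobiusFun g (q.2 : ℂ) = (p.2 : ℂ) := congrArg Prod.snd heq
    apply Circle.coe_injective
    apply mobius_inj g (hPdet g hg) (Circle.norm_coe _).le (Circle.norm_coe _).le
    rw [h1, h2, hpe]
  have hLfin : α L < ⊤ := hα.2 L hLcpt hLgeod
  -- sup of |ξ|
  have : Nonempty (Circle × Circle) := ⟨(1, 1)⟩
  obtain ⟨x₀, hx₀'⟩ := (continuous_abs.comp hξc).exists_forall_ge'
    ((1, 1) : Circle × Circle) (by simp [Filter.cocompact_eq_bot])
  have hx₀ : ∀ y : Circle × Circle, |ξ y| ≤ |ξ x₀| := hx₀'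
  set M : ℝ := |ξ x₀| with hM
  have hM0 : 0 ≤ M := abs_nonneg _
  refine ⟨M * (α L).toReal, ?_⟩
  rintro φ ⟨a, b, hab, hφf⟩
  have hφf' : ∀ z : Circle, (φ z : ℂ) = mobiusFun (a, b) (z : ℂ) := hφf
  -- find the group element
  have hane : a ≠ 0 := by
    intro h
    rw [h] at hab
    simp only [norm_zero] at hab
    nlinarith [norm_nonneg b]
  have haabs : 0 < norm a := norm_pos_iff.mpr hane
  have hw : -b / a ∈ Metric.ball (0 : ℂ) 1 := by
    rw [Metric.mem_ball, Complex.dist_eq, sub_zero, norm_div, norm_neg,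
      div_lt_one haabs]
    nlinarith [norm_nonneg b, norm_nonneg a]
  rw [← hcover] at hw
  simp only [mem_iUnion, mem_image] at hw
  obtain ⟨γ, hγΓ, k, hkK, hγk⟩ := hw
  have hγdet := hnorm γ hγΓ
  have hkabs : norm k < 1 := hk1 k hkK
  set g' : ℂ × ℂ := mobiusComp (a, b) γ with hg'
  have hg'det : norm g'.1 ^ 2 - norm g'.2 ^ 2 = 1 :=
    det_comp _ _ hab hγdet
  have hg'k : mobiusFun g' k = 0 := by
    rw [← mobius_comp_apply _ _ (denom_ne γ hγdet hkabs.le), hγk]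
    have hnum : a * (-b / a) + b = 0 := by
      field_simp
      ring
    show ((a, b).1 * (-b / a) + (a, b).2) / _ = 0
    rw [hnum, zero_div]
  have hg'2 : g'.1 * k + g'.2 = 0 := by
    have hD := denom_ne g' hg'det hkabs.le
    rw [mobiusFun, div_eq_zero_iff] at hg'k
    rcases hg'k with h | h
    · exact h
    · exact absurd h hD
  -- the inverse parameters lie in P
  set h : ℂ × ℂ := ((starRingEnd ℂ) g'.1, -g'.2) with hh
  have hhdet : norm h.1 ^ 2 - norm h.2 ^ 2 = 1 := det_inv g' hg'det
  have hg'2abs : norm g'.2 = norm g'.1 * norm k := by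
    have : g'.2 = -(g'.1 * k) := by linear_combination hg'2
    rw [this, norm_neg, norm_mul]
  have hskpos := hs_pos k hkK
  have hg1s : norm g'.1 * s k = 1 := by
    have h3 : norm g'.2 ^ 2 = norm g'.1 ^ 2 * norm k ^ 2 := by
      rw [hg'2abs]; ring
    have h1 : (norm g'.1 * s k) ^ 2 = 1 := by
      rw [mul_pow, hs_sq k hkK]
      linear_combination hg'det + h3
    have h2 : 0 ≤ norm g'.1 * s k := by positivity
    have h4 : norm g'.1 * s k = Real.sqrt 1 := by
      rw [← Real.sqrt_sq h2, h1]
    rwa [Real.sqrt_one] at h4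
  have hvabs : norm ((starRingEnd ℂ) g'.1 * ((s k : ℝ) : ℂ)) = 1 := by
    rw [norm_mul, Complex.norm_conj, Complex.norm_real, Real.norm_eq_abs, abs_of_pos hskpos]
    exact hg1s
  have hhP : h ∈ P := by
    refine ⟨(k, cpt _ hvabs), ⟨hkK, trivial⟩, ?_⟩
    have hsne' : ((s k : ℝ) : ℂ) ≠ 0 := by
      simp only [ne_eq, Complex.ofReal_eq_zero]; linarith
    simp only [hF, cpt_coe]
    refine Prod.ext ?_ ?_
    · show (starRingEnd ℂ) g'.1 * ((s k : ℝ) : ℂ) / ((s k : ℝ) : ℂ) = h.1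
      rw [mul_div_cancel_right₀ _ hsne']
    · show (starRingEnd ℂ) ((starRingEnd ℂ) g'.1 * ((s k : ℝ) : ℂ)) * k / ((s k : ℝ) : ℂ) = h.2
      rw [map_mul, Complex.conj_conj, Complex.conj_ofReal]
      show g'.1 * ((s k : ℝ) : ℂ) * k / ((s k : ℝ) : ℂ) = -g'.2
      field_simp
      linear_combination hg'2
  -- circle maps
  set φγ : Circle → Circle := fun z =>
    cpt (mobiusFun γ (z : ℂ)) (abs_mobius γ hγdet (Circle.norm_coe z)) with hφγ
  set ψ : Circle → Circle := fun z =>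
    cpt (mobiusFun g' (z : ℂ)) (abs_mobius g' hg'det (Circle.norm_coe z)) with hψ
  have hφcont : Continuous φ := by
    apply continuous_induced_rng.2
    have h1 : Continuous fun z : Circle => mobiusFun (a, b) (z : ℂ) := by
      simp only [mobiusFun]
      apply Continuous.div
      · exact (continuous_const.mul continuous_subtype_val).add continuous_const
      · exact (continuous_const.mul continuous_subtype_val).add continuous_const
      · intro z
        exact denom_ne (a, b) hab (Circle.norm_coe z).le
    exact h1.congr fun z => (hφf' z).symm
  set T : Set (Circle × Circle) := (fun p : Circle × Circle => (φ p.1, φ p.2)) ⁻¹' S with hT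
  have hTcl : IsClosed T :=
    hScl.preimage ((hφcont.comp continuous_fst).prodMk (hφcont.comp continuous_snd))
  have hTmeas : MeasurableSet T := hTcl.measurableSet
  have key1 : α ((fun p : Circle × Circle => (φγ p.1, φγ p.2)) ⁻¹' T) = α T :=
    hinvar γ hγΓ φγ (fun z => rfl) T hTmeas
  have hcompose : ∀ z : Circle, φ (φγ z) = ψ z := by
    intro z
    apply Circle.coe_injective
    rw [hφf' (φγ z)]
    show mobiusFun (a, b) (mobiusFun γ (z : ℂ)) = mobiusFun g' (z : ℂ)
    exact mobius_comp_apply _ _ (denom_ne γ hγdet (Circle.norm_coe z).le)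
  have key2 : (fun p : Circle × Circle => (φγ p.1, φγ p.2)) ⁻¹' T
      = (fun p : Circle × Circle => (ψ p.1, ψ p.2)) ⁻¹' S := by
    ext p
    simp only [hT, mem_preimage, hcompose]
  have key3 : (fun p : Circle × Circle => (ψ p.1, ψ p.2)) ⁻¹' S ⊆ L := by
    intro p hp
    refine ⟨(h, (ψ p.1, ψ p.2)), ⟨hhP, hp⟩, ?_⟩
    have hinvz : ∀ z : Circle, mobiusFun h ((ψ z : Circle) : ℂ) = (z : ℂ) := by
      intro z
      show mobiusFun h (mobiusFun g' (z : ℂ)) = (z : ℂ)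
      rw [mobius_comp_apply _ _ (denom_ne g' hg'det (Circle.norm_coe z).le)]
      rw [hh, comp_inv_left g' hg'det, mobiusFun_one]
    show (mobiusFun h ((ψ p.1 : Circle) : ℂ), mobiusFun h ((ψ p.2 : Circle) : ℂ))
      = ((p.1 : ℂ), (p.2 : ℂ))
    rw [hinvz, hinvz]
  have hTle : α T ≤ α L := by
    calc α T = α ((fun p : Circle × Circle => (φγ p.1, φγ p.2)) ⁻¹' T) := key1.symm
    _ = α ((fun p : Circle × Circle => (ψ p.1, ψ p.2)) ⁻¹' S) := by rw [key2]
    _ ≤ α L := measure_mono key3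
  -- final
  have hvan : ∀ p ∉ T, ξ (φ p.1, φ p.2) = 0 := by
    intro p hp
    exact image_eq_zero_of_notMem_tsupport hp
  rw [← setIntegral_eq_integral_of_forall_compl_eq_zero hvan]
  calc |∫ p in T, ξ (φ p.1, φ p.2) ∂α| ≤ M * (α T).toReal := by
        rw [← Real.norm_eq_abs]
        exact norm_setIntegral_le_of_norm_le_const (lt_of_le_of_lt hTle hLfin)
          (fun x _ => by rw [Real.norm_eq_abs]; exact hx₀ _)
  _ ≤ M * (α L).toReal :=
        mul_le_mul_of_nonneg_left (ENNReal.toReal_mono hLfin.ne hTle) hM0
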